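/- Fix β ∈ ℝ. For every Υ ∈ B↗([0,L(β)]²), one has J̃(u_β,Υ) ≤ ∫_0^{L(β)} 2/(1 − βt²) dt = 𝓛(β). -/

import Mathlib

open MeasureTheory

/-- A monotone partition of the box `[a1,a2]×[b1,b2]` all of whose points lie on `Υ`. -/
def IsPartitionOn (a1 a2 b1 b2 : ℝ) (Υ : Set (ℝ × ℝ)) (n : ℕ) (x y : Fin (n + 1) → ℝ) : Prop :=
  Monotone x ∧ Monotone y ∧ x 0 = a1 ∧ y 0 = b1 ∧ x (Fin.last n) = a2 ∧ y (Fin.last n) = b2 ∧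
    ∀ k : Fin (n + 1), (x k, y k) ∈ Υ

/-- `J̃(u,P) = 2 Σ_k (∫_{x_k}^{x_{k+1}} ∫_{y_k}^{y_{k+1}} u(x,y) dx dy)^{1/2}`. -/
noncomputable def Jpart (u : ℝ × ℝ → ℝ) (n : ℕ) (x y : Fin (n + 1) → ℝ) : ℝ :=
  2 * ∑ k : Fin n,
    Real.sqrt (∫ s in (x k.castSucc)..(x k.succ), ∫ t in (y k.castSucc)..(y k.succ), u (s, t))

/-- `J̃(u,Υ) = lim_{ε→0} inf {J̃(u,P) : P a partition with points on Υ, mesh < ε}`. -/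
noncomputable def Jcurve (a1 a2 b1 b2 : ℝ) (u : ℝ × ℝ → ℝ) (Υ : Set (ℝ × ℝ)) : ℝ :=
  ⨆ ε : {e : ℝ // 0 < e},
    sInf {r : ℝ | ∃ (n : ℕ) (x y : Fin (n + 1) → ℝ),
      IsPartitionOn a1 a2 b1 b2 Υ n x y ∧
      (∀ k : Fin n, x k.succ - x k.castSucc < (ε : ℝ) ∧ y k.succ - y k.castSucc < (ε : ℝ)) ∧
      r = Jpart u n x y}

/-- `B↗`: connected subsets of the box containing both corners, monotone in the sense that
`(x_1-x_2)(y_1-y_2) ≥ 0` for any two points. -/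
def Bup (a1 a2 b1 b2 : ℝ) : Set (Set (ℝ × ℝ)) :=
  {Υ | Υ ⊆ Set.Icc (a1, b1) (a2, b2) ∧ IsConnected Υ ∧ (a1, b1) ∈ Υ ∧ (a2, b2) ∈ Υ ∧
    ∀ p ∈ Υ, ∀ q ∈ Υ, 0 ≤ (p.1 - q.1) * (p.2 - q.2)}

/-- `L(β) = ((1-e^{-β})/β)^{1/2}` for `β ≠ 0`, `L(0) = 1`. -/
noncomputable def Lb (β : ℝ) : ℝ :=
  if β = 0 then 1 else Real.sqrt ((1 - Real.exp (-β)) / β)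

/-- The density `u_β(x,y) = 1_{[0,L(β)]²}(x,y) (1-βxy)^{-2}`. -/
noncomputable def uBeta (β : ℝ) : ℝ × ℝ → ℝ :=
  (Set.Icc (0, 0) (Lb β, Lb β)).indicator fun p => ((1 - β * p.1 * p.2) ^ 2)⁻¹

/-- The limit function 𝓛(β). -/
noncomputable def calL (β : ℝ) : ℝ :=
  if 0 < β then 2 / Real.sqrt β * Real.arsinh (Real.sqrt (Real.exp β - 1))
  else if β < 0 then 2 / Real.sqrt |β| * Real.arcsin (Real.sqrt (1 - Real.exp β))
  else 2

/-!
On a rectangle `[x₁,x₂]×[y₁,y₂] ⊆ [0,L(β)]²` of side at most `ε`, the values of `1 - βst` on it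
and of `1 - βτ²` for `τ² ∈ [x₁y₁, x₂y₂]` agree up to a factor `1 + O(ε)`, so twice the square
root of the mass of `u_β` is at most `(1 + O(ε)) · 2√((x₂-x₁)(y₂-y₁)) / (1-βτ²)`. The geometric
mean is superadditive, `√((x₂-x₁)(y₂-y₁)) ≤ √(x₂y₂) - √(x₁y₁)`, so each term of `J̃(u_β,P)` is
at most `1 + O(ε)` times the integral of `2/(1-βτ²)` over `[√(x₁y₁), √(x₂y₂)]`, and these
intervals tile `[0,L(β)]`. Partitions on `Υ` of arbitrarily small mesh exist because `x + y` maps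
the connected set `Υ` onto an interval and, on a monotone set, the level of `x + y` orders the
points. The integral is evaluated with the antiderivatives `(2/√β) artanh (√β t)` and
`(2/√-β) arctan (√-β t)`.
-/

open Real Set Filter Topology Finset

lemma Jpart_nonneg (u : ℝ × ℝ → ℝ) (n : ℕ) (x y : Fin (n + 1) → ℝ) : 0 ≤ Jpart u n x y :=
  mul_nonneg zero_le_two (sum_nonneg fun _ _ => sqrt_nonneg _)

lemma Jcurve_le_of_forall_exists_Jpart_le {a₁ a₂ b₁ b₂ B : ℝ} {u : ℝ × ℝ → ℝ} {Υ : Set (ℝ × ℝ)}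
    (h : ∀ ε > 0, ∀ δ > 0, ∃ (n : ℕ) (x y : Fin (n + 1) → ℝ), IsPartitionOn a₁ a₂ b₁ b₂ Υ n x y ∧
      (∀ k : Fin n, x k.succ - x k.castSucc < ε ∧ y k.succ - y k.castSucc < ε) ∧
      Jpart u n x y ≤ B + δ) :
    Jcurve a₁ a₂ b₁ b₂ u Υ ≤ B := by
  have : Nonempty {e : ℝ // 0 < e} := ⟨⟨1, one_pos⟩⟩
  unfold Jcurve
  refine ciSup_le fun ε => le_of_forall_pos_le_add fun δ hδ => ?_
  obtain ⟨n, x, y, hP, hmesh, hJ⟩ := h ε ε.2 δ hδ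
  have hbdd : BddBelow {r : ℝ | ∃ (n : ℕ) (x y : Fin (n + 1) → ℝ),
      IsPartitionOn a₁ a₂ b₁ b₂ Υ n x y ∧
      (∀ k : Fin n, x k.succ - x k.castSucc < (ε : ℝ) ∧ y k.succ - y k.castSucc < (ε : ℝ)) ∧
      r = Jpart u n x y} := by
    refine ⟨0, ?_⟩
    rintro r ⟨n, x, y, -, -, rfl⟩
    exact Jpart_nonneg u n x y
  exact (csInf_le hbdd ⟨n, x, y, hP, hmesh, rfl⟩).trans hJ

lemma Prod.le_of_add_le_add_of_mul_nonneg {p q : ℝ × ℝ} (hpq : 0 ≤ (p.1 - q.1) * (p.2 - q.2))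
    (h : p.1 + p.2 ≤ q.1 + q.2) : p ≤ q :=
  Prod.le_def.2 ⟨by nlinarith, by nlinarith⟩

lemma exists_isPartitionOn_mesh_lt {a₁ a₂ b₁ b₂ : ℝ} {Υ : Set (ℝ × ℝ)}
    (hΥ : Υ ∈ Bup a₁ a₂ b₁ b₂) {ε : ℝ} (hε : 0 < ε) :
    ∃ (n : ℕ) (x y : Fin (n + 1) → ℝ), IsPartitionOn a₁ a₂ b₁ b₂ Υ n x y ∧
      ∀ k : Fin n, x k.succ - x k.castSucc < ε ∧ y k.succ - y k.castSucc < ε := by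
  obtain ⟨hbox, hconn, hstart, hend, hmono⟩ := hΥ
  set D := a₂ + b₂ - (a₁ + b₁)
  have hD : 0 ≤ D := by
    have := (hbox hend).1
    linarith [this.1, this.2]
  obtain ⟨n, hn⟩ := exists_nat_gt (D / ε)
  have hn0 : 0 < (n : ℝ) := (div_nonneg hD hε.le).trans_lt hn
  have hstep : D / n < ε := by rwa [div_lt_iff₀ hn0, mul_comm, ← div_lt_iff₀ hε]
  have hlevel : ∀ k : Fin (n + 1), ∃ p ∈ Υ, p.1 + p.2 = a₁ + b₁ + D * k / n := by
    intro k
    have hk : (k : ℝ) ≤ n := by exact_mod_cast Fin.is_le k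
    have hsum : IsPreconnected ((fun p : ℝ × ℝ => p.1 + p.2) '' Υ) :=
      (hconn.image _ (by fun_prop)).isPreconnected
    refine hsum.ordConnected.out ⟨_, hstart, rfl⟩ ⟨_, hend, rfl⟩ ⟨?_, ?_⟩
    · have : 0 ≤ D * k / n := by positivity
      linarith
    · have : D * k / n ≤ D := by
        rw [div_le_iff₀ hn0]
        exact mul_le_mul_of_nonneg_left hk hD
      linarith
  choose p hpΥ hps using hlevel
  have hpmono : Monotone p := fun k l hkl =>
    Prod.le_of_add_le_add_of_mul_nonneg (hmono _ (hpΥ k) _ (hpΥ l)) (by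
      rw [hps, hps]
      gcongr
      exact_mod_cast hkl)
  have hp0 : p 0 = (a₁, b₁) :=
    le_antisymm (Prod.le_of_add_le_add_of_mul_nonneg (hmono _ (hpΥ 0) _ hstart) (by simp [hps]))
      (hbox (hpΥ 0)).1
  have hpn : p (Fin.last n) = (a₂, b₂) := by
    refine le_antisymm (hbox (hpΥ _)).2
      (Prod.le_of_add_le_add_of_mul_nonneg (hmono _ hend _ (hpΥ _)) ?_)
    rw [hps, Fin.val_last, mul_div_cancel_right₀ _ hn0.ne']
    simp [D]
  refine ⟨n, fun k => (p k).1, fun k => (p k).2,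
    ⟨fun k l h => (hpmono h).1, fun k l h => (hpmono h).2, by simp [hp0], by simp [hp0],
      by simp [hpn], by simp [hpn], hpΥ⟩, fun k => ?_⟩
  have hinc : (p k.succ).1 + (p k.succ).2 - ((p k.castSucc).1 + (p k.castSucc).2) = D / n := by
    rw [hps, hps, Fin.val_succ, Fin.val_castSucc]
    push_cast
    ring
  have hle := hpmono (Fin.castSucc_le_succ k)
  constructor <;> linarith [hle.1, hle.2]

lemma sqrt_mul_sub_le_sub_sqrt_mul {x₁ x₂ y₁ y₂ : ℝ} (hx₁ : 0 ≤ x₁) (hy₁ : 0 ≤ y₁)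
    (hx : x₁ ≤ x₂) (hy : y₁ ≤ y₂) :
    √((x₂ - x₁) * (y₂ - y₁)) ≤ √(x₂ * y₂) - √(x₁ * y₁) := by
  obtain ⟨a, ha, rfl⟩ : ∃ a, 0 ≤ a ∧ x₁ = a ^ 2 := ⟨√x₁, sqrt_nonneg _, (sq_sqrt hx₁).symm⟩
  obtain ⟨b, hb, rfl⟩ : ∃ b, 0 ≤ b ∧ x₂ = b ^ 2 :=
    ⟨√x₂, sqrt_nonneg _, (sq_sqrt (hx₁.trans hx)).symm⟩
  obtain ⟨c, hc, rfl⟩ : ∃ c, 0 ≤ c ∧ y₁ = c ^ 2 := ⟨√y₁, sqrt_nonneg _, (sq_sqrt hy₁).symm⟩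
  obtain ⟨d, hd, rfl⟩ : ∃ d, 0 ≤ d ∧ y₂ = d ^ 2 :=
    ⟨√y₂, sqrt_nonneg _, (sq_sqrt (hy₁.trans hy)).symm⟩
  have hab : a ≤ b := (pow_le_pow_iff_left₀ ha hb two_ne_zero).1 hx
  have hcd : c ≤ d := (pow_le_pow_iff_left₀ hc hd two_ne_zero).1 hy
  rw [← mul_pow, ← mul_pow, sqrt_sq (by positivity), sqrt_sq (by positivity)]
  -- `(bd - ac)² - (b² - a²)(d² - c²) = (bc - ad)²`
  exact sqrt_le_iff.2
    ⟨sub_nonneg.2 (mul_le_mul hab hcd hc hb), by nlinarith [sq_nonneg (b * c - a * d)]⟩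

lemma integral_integral_le_of_norm_le {u : ℝ × ℝ → ℝ} {x₁ x₂ y₁ y₂ M : ℝ}
    (hx : x₁ ≤ x₂) (hy : y₁ ≤ y₂) (hu : ∀ s ∈ Ioc x₁ x₂, ∀ t ∈ Ioc y₁ y₂, ‖u (s, t)‖ ≤ M) :
    ∫ s in x₁..x₂, ∫ t in y₁..y₂, u (s, t) ≤ M * ((x₂ - x₁) * (y₂ - y₁)) := by
  have hinner : ∀ s ∈ uIoc x₁ x₂, ‖∫ t in y₁..y₂, u (s, t)‖ ≤ M * (y₂ - y₁) := by
    intro s hs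
    rw [uIoc_of_le hx] at hs
    rw [← abs_of_nonneg (sub_nonneg.2 hy)]
    exact intervalIntegral.norm_integral_le_of_norm_le_const fun t ht =>
      hu s hs t (by rwa [uIoc_of_le hy] at ht)
  calc ∫ s in x₁..x₂, ∫ t in y₁..y₂, u (s, t)
      ≤ M * (y₂ - y₁) * |x₂ - x₁| :=
        (le_norm_self _).trans (intervalIntegral.norm_integral_le_of_norm_le_const hinner)
    _ = M * ((x₂ - x₁) * (y₂ - y₁)) := by rw [abs_of_nonneg (sub_nonneg.2 hx)]; ring

lemma sum_integral_adjacent_intervals_fin {E : Type*} [NormedAddCommGroup E] [NormedSpace ℝ E]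
    {μ : Measure ℝ} {f : ℝ → E} {n : ℕ} {a : Fin (n + 1) → ℝ}
    (hf : ∀ i j, IntervalIntegrable f μ (a i) (a j)) :
    ∑ k : Fin n, ∫ x in a k.castSucc..a k.succ, f x ∂μ = ∫ x in a 0..a (Fin.last n), f x ∂μ := by
  induction n with
  | zero => simp
  | succ n ih =>
    have hinit := ih (a := a ∘ Fin.castSucc) fun i j => hf _ _
    simp only [Function.comp_apply, Fin.castSucc_zero] at hinit
    rw [Fin.sum_univ_castSucc]
    simp only [Fin.succ_castSucc]
    rw [hinit, intervalIntegral.integral_add_adjacent_intervals (hf _ _) (hf _ _),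
      Fin.succ_last]

lemma one_sub_mul_mem_Icc_min_max {β w₁ w₂ w : ℝ} (hw : w ∈ Icc w₁ w₂) :
    1 - β * w ∈ Icc (min (1 - β * w₁) (1 - β * w₂)) (max (1 - β * w₁) (1 - β * w₂)) := by
  rcases le_total 0 β with hβ | hβ
  · exact ⟨min_le_of_right_le (by nlinarith [hw.2]), le_max_of_le_left (by nlinarith [hw.1])⟩
  · exact ⟨min_le_of_left_le (by nlinarith [hw.1]), le_max_of_le_right (by nlinarith [hw.2])⟩

lemma div_sqrt_eq_sqrt_of_sq_eq {z c r : ℝ} (hz : 0 ≤ z) (hc : 0 < c) (h : z ^ 2 = r * c) :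
    z / √c = √r := by
  rw [← sqrt_sq hz, h, sqrt_mul' r hc.le, mul_div_cancel_right₀ _ (sqrt_pos.2 hc).ne']

lemma mul_Lb_sq (β : ℝ) : β * Lb β ^ 2 = 1 - exp (-β) := by
  unfold Lb
  split_ifs with hβ
  · simp [hβ]
  · have hq : 0 ≤ (1 - exp (-β)) / β := by
      rcases lt_or_gt_of_ne hβ with h | h
      · exact div_nonneg_of_nonpos (by linarith [one_le_exp_iff.2 (neg_nonneg.2 h.le)]) h.le
      · exact div_nonneg (by linarith [exp_le_one_iff.2 (neg_nonpos.2 h.le)]) h.le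
    rw [sq_sqrt hq]
    field_simp

lemma Lb_pos (β : ℝ) : 0 < Lb β := by
  have hL : 0 ≤ Lb β := by unfold Lb; split_ifs <;> positivity
  refine hL.lt_of_ne' fun h0 => ?_
  have h := mul_Lb_sq β
  rw [h0, zero_pow two_ne_zero, mul_zero, eq_comm, sub_eq_zero, eq_comm, exp_eq_one_iff,
    neg_eq_zero] at h
  simp [Lb, h] at h0

noncomputable def denomMin (β : ℝ) : ℝ := min 1 (exp (-β))

lemma denomMin_pos (β : ℝ) : 0 < denomMin β := lt_min one_pos (exp_pos _)

lemma denomMin_le_one_sub_mul (β : ℝ) {w : ℝ} (hw₀ : 0 ≤ w) (hw : w ≤ Lb β ^ 2) :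
    denomMin β ≤ 1 - β * w := by
  rcases le_or_gt β 0 with hβ | hβ
  · exact (min_le_left _ _).trans (by nlinarith)
  · have h := mul_le_mul_of_nonneg_left hw hβ.le
    rw [mul_Lb_sq] at h
    exact (min_le_right _ _).trans (by linarith)

lemma one_sub_mul_sq_pos (β : ℝ) {τ : ℝ} (hτ : τ ∈ Icc 0 (Lb β)) : 0 < 1 - β * τ ^ 2 :=
  (denomMin_pos β).trans_le
    (denomMin_le_one_sub_mul β (sq_nonneg τ) (pow_le_pow_left₀ hτ.1 hτ.2 2))

lemma intervalIntegrable_two_div_one_sub_mul_sq (β : ℝ) {a b : ℝ} (ha : a ∈ Icc 0 (Lb β))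
    (hb : b ∈ Icc 0 (Lb β)) :
    IntervalIntegrable (fun τ => 2 / (1 - β * τ ^ 2)) volume a b :=
  (continuousOn_const.div (by fun_prop) fun τ hτ =>
    (one_sub_mul_sq_pos β (uIcc_subset_Icc ha hb hτ)).ne').intervalIntegrable

lemma norm_uBeta_le (β : ℝ) {s t P : ℝ} (hP : 0 < P) (hst : P ≤ 1 - β * (s * t)) :
    ‖uBeta β (s, t)‖ ≤ (P ^ 2)⁻¹ := by
  unfold uBeta
  rw [indicator_apply]
  split_ifs
  · rw [← mul_assoc] at hst
    dsimp only
    rw [norm_inv, norm_pow, Real.norm_of_nonneg (hP.le.trans hst)]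
    gcongr
  · rw [norm_zero]
    positivity

lemma two_mul_sqrt_integral_uBeta_le (β : ℝ) {x₁ x₂ y₁ y₂ : ℝ} (hx₁ : 0 ≤ x₁) (hy₁ : 0 ≤ y₁)
    (hx : x₁ ≤ x₂) (hy : y₁ ≤ y₂) (hx₂ : x₂ ≤ Lb β) (hy₂ : y₂ ≤ Lb β) :
    2 * √(∫ s in x₁..x₂, ∫ t in y₁..y₂, uBeta β (s, t)) ≤
      (1 + |β| * (x₂ * y₂ - x₁ * y₁) / denomMin β) *
        ∫ τ in √(x₁ * y₁)..√(x₂ * y₂), 2 / (1 - β * τ ^ 2) := by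
  set w₁ := x₁ * y₁
  set w₂ := x₂ * y₂
  have hw₁ : 0 ≤ w₁ := mul_nonneg hx₁ hy₁
  have hw : w₁ ≤ w₂ := mul_le_mul hx hy hy₁ (hx₁.trans hx)
  have hw₂ : w₂ ≤ Lb β ^ 2 := by
    rw [sq]
    exact mul_le_mul hx₂ hy₂ (hy₁.trans hy) (Lb_pos β).le
  set P := min (1 - β * w₁) (1 - β * w₂)
  set Q := max (1 - β * w₁) (1 - β * w₂)
  have hmP : denomMin β ≤ P :=
    le_min (denomMin_le_one_sub_mul β hw₁ (hw.trans hw₂))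
      (denomMin_le_one_sub_mul β (hw₁.trans hw) hw₂)
  have hP : 0 < P := (denomMin_pos β).trans_le hmP
  have hQ : 0 < Q := hP.trans_le min_le_max
  have hQP : Q - P = |β| * (w₂ - w₁) := by
    rw [max_sub_min_eq_abs, show 1 - β * w₂ - (1 - β * w₁) = -(β * (w₂ - w₁)) by ring, abs_neg,
      abs_mul, abs_of_nonneg (sub_nonneg.2 hw)]
  have hsqrt : √(∫ s in x₁..x₂, ∫ t in y₁..y₂, uBeta β (s, t)) ≤ P⁻¹ * (√w₂ - √w₁) := by
    have hmass := integral_integral_le_of_norm_le (u := uBeta β) hx hy fun s hs t ht =>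
      norm_uBeta_le β hP (one_sub_mul_mem_Icc_min_max
        ⟨mul_le_mul hs.1.le ht.1.le hy₁ (hx₁.trans hs.1.le),
          mul_le_mul hs.2 ht.2 (hy₁.trans ht.1.le) (hx₁.trans hx)⟩).1
    calc √(∫ s in x₁..x₂, ∫ t in y₁..y₂, uBeta β (s, t))
        ≤ √((P ^ 2)⁻¹ * ((x₂ - x₁) * (y₂ - y₁))) := sqrt_le_sqrt hmass
      _ = P⁻¹ * √((x₂ - x₁) * (y₂ - y₁)) := by
        rw [sqrt_mul (by positivity), sqrt_inv, sqrt_sq hP.le]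
      _ ≤ P⁻¹ * (√w₂ - √w₁) := by
        gcongr
        exact sqrt_mul_sub_le_sub_sqrt_mul hx₁ hy₁ hx hy
  have hintegral : 2 / Q * (√w₂ - √w₁) ≤ ∫ τ in √w₁..√w₂, 2 / (1 - β * τ ^ 2) := by
    have hmem : ∀ τ ∈ Icc √w₁ √w₂, τ ∈ Icc 0 (Lb β) := fun τ hτ =>
      ⟨(sqrt_nonneg _).trans hτ.1,
        hτ.2.trans ((sqrt_le_sqrt hw₂).trans_eq (sqrt_sq (Lb_pos β).le))⟩
    have hle := intervalIntegral.integral_mono_on (sqrt_le_sqrt hw) intervalIntegrable_const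
      (intervalIntegrable_two_div_one_sub_mul_sq β (hmem _ ⟨le_rfl, sqrt_le_sqrt hw⟩)
        (hmem _ ⟨sqrt_le_sqrt hw, le_rfl⟩))
      fun τ hτ => div_le_div_of_nonneg_left zero_le_two (one_sub_mul_sq_pos β (hmem τ hτ))
        (one_sub_mul_mem_Icc_min_max (w := τ ^ 2)
          ⟨(sq_sqrt hw₁).symm.trans_le (pow_le_pow_left₀ (sqrt_nonneg _) hτ.1 2),
            (pow_le_pow_left₀ ((sqrt_nonneg _).trans hτ.1) hτ.2 2).trans_eq
              (sq_sqrt (hw₁.trans hw))⟩).2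
    rwa [intervalIntegral.integral_const, smul_eq_mul, mul_comm] at hle
  calc 2 * √(∫ s in x₁..x₂, ∫ t in y₁..y₂, uBeta β (s, t))
      ≤ 2 * (P⁻¹ * (√w₂ - √w₁)) := by gcongr
    _ = (1 + (Q - P) / P) * (2 / Q * (√w₂ - √w₁)) := by field_simp; ring
    _ ≤ (1 + |β| * (w₂ - w₁) / denomMin β) * ∫ τ in √w₁..√w₂, 2 / (1 - β * τ ^ 2) := by
      have hΔ : 0 ≤ |β| * (w₂ - w₁) := mul_nonneg (abs_nonneg β) (sub_nonneg.2 hw)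
      rw [hQP]
      refine mul_le_mul (by gcongr; exact denomMin_pos β) hintegral ?_
        (add_nonneg zero_le_one (div_nonneg hΔ (denomMin_pos β).le))
      exact mul_nonneg (by positivity) (sub_nonneg.2 (sqrt_le_sqrt hw))

lemma Jpart_uBeta_le (β : ℝ) {Υ : Set (ℝ × ℝ)} {n : ℕ} {x y : Fin (n + 1) → ℝ} {ε : ℝ}
    (hP : IsPartitionOn 0 (Lb β) 0 (Lb β) Υ n x y)
    (hmesh : ∀ k : Fin n, x k.succ - x k.castSucc ≤ ε ∧ y k.succ - y k.castSucc ≤ ε) :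
    Jpart (uBeta β) n x y ≤
      (1 + |β| * (2 * Lb β * ε) / denomMin β) * ∫ τ in (0 : ℝ)..Lb β, 2 / (1 - β * τ ^ 2) := by
  obtain ⟨hxm, hym, hx0, hy0, hxL, hyL, -⟩ := hP
  set L := Lb β
  have hL : 0 ≤ L := (Lb_pos β).le
  have hxI : ∀ k, x k ∈ Icc 0 L := fun k => ⟨hx0 ▸ hxm (Fin.zero_le k), hxL ▸ hxm (Fin.le_last k)⟩
  have hyI : ∀ k, y k ∈ Icc 0 L := fun k => ⟨hy0 ▸ hym (Fin.zero_le k), hyL ▸ hym (Fin.le_last k)⟩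
  set a : Fin (n + 1) → ℝ := fun k => √(x k * y k)
  have haI : ∀ k, a k ∈ Icc 0 L := fun k =>
    ⟨sqrt_nonneg _, (sqrt_le_sqrt (mul_le_mul (hxI k).2 (hyI k).2 (hyI k).1 hL)).trans_eq
      (sqrt_mul_self hL)⟩
  have hterm : ∀ k : Fin n, 2 * √(∫ s in x k.castSucc..x k.succ, ∫ t in y k.castSucc..y k.succ,
      uBeta β (s, t)) ≤ (1 + |β| * (2 * L * ε) / denomMin β) *
        ∫ τ in a k.castSucc..a k.succ, 2 / (1 - β * τ ^ 2) := by
    intro k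
    have hk := Fin.castSucc_le_succ k
    refine (two_mul_sqrt_integral_uBeta_le β (hxI _).1 (hyI _).1 (hxm hk) (hym hk) (hxI _).2
      (hyI _).2).trans (mul_le_mul_of_nonneg_right ?_ ?_)
    · have hΔ : x k.succ * y k.succ - x k.castSucc * y k.castSucc ≤ 2 * L * ε := by
        rw [show x k.succ * y k.succ - x k.castSucc * y k.castSucc =
          x k.succ * (y k.succ - y k.castSucc) + y k.castSucc * (x k.succ - x k.castSucc) by ring]
        nlinarith [(hxI k.succ).2, (hyI k.castSucc).2, (hxI k.succ).1, (hyI k.castSucc).1,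
          hmesh k, hxm hk, hym hk]
      gcongr
      exact (denomMin_pos β).le
    · refine intervalIntegral.integral_nonneg (sqrt_le_sqrt (mul_le_mul (hxm hk) (hym hk)
        (hyI _).1 (hxI _).1)) fun τ hτ => (div_pos two_pos (one_sub_mul_sq_pos β ?_)).le
      exact ⟨(haI _).1.trans hτ.1, hτ.2.trans (haI _).2⟩
  calc Jpart (uBeta β) n x y
      ≤ ∑ k : Fin n, (1 + |β| * (2 * L * ε) / denomMin β) *
          ∫ τ in a k.castSucc..a k.succ, 2 / (1 - β * τ ^ 2) := by
        rw [Jpart, mul_sum]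
        exact sum_le_sum fun k _ => hterm k
    _ = (1 + |β| * (2 * L * ε) / denomMin β) * ∫ τ in (0 : ℝ)..L, 2 / (1 - β * τ ^ 2) := by
      rw [← mul_sum, sum_integral_adjacent_intervals_fin (a := a) fun i j =>
        intervalIntegrable_two_div_one_sub_mul_sq β (haI _) (haI _)]
      simp [a, hx0, hy0, hxL, hyL, sqrt_mul_self hL]

lemma integral_two_div_one_sub_mul_sq_of_neg {β : ℝ} (hβ : β < 0) :
    ∫ t in (0 : ℝ)..Lb β, 2 / (1 - β * t ^ 2) = calL β := by
  set b := √|β|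
  have hb : 0 < b := sqrt_pos.2 (abs_pos.2 hβ.ne)
  have hb2 : b ^ 2 = -β := by rw [sq_sqrt (abs_nonneg β), abs_of_neg hβ]
  have hderiv : ∀ t, HasDerivAt (fun t => 2 / b * arctan (b * t)) (2 / (1 - β * t ^ 2)) t := by
    intro t
    refine ((((hasDerivAt_id' t).const_mul b).arctan).const_mul (2 / b)).congr_deriv ?_
    rw [mul_one, mul_pow, hb2]
    field_simp
    ring
  have hL := (Lb_pos β).le
  have hz : 1 + (b * Lb β) ^ 2 = exp (-β) := by
    rw [mul_pow, hb2, neg_mul, mul_Lb_sq]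
    ring
  rw [intervalIntegral.integral_eq_sub_of_hasDerivAt (fun t _ => hderiv t)
    (intervalIntegrable_two_div_one_sub_mul_sq β ⟨le_rfl, hL⟩ ⟨hL, le_rfl⟩),
    mul_zero, arctan_zero, mul_zero, sub_zero, arctan_eq_arcsin, hz,
    div_sqrt_eq_sqrt_of_sq_eq (by positivity) (exp_pos _) (r := 1 - exp β)]
  · simp [calL, hβ.not_gt, hβ, b]
  · rw [sub_mul, one_mul, ← exp_add, add_neg_cancel, exp_zero, ← hz]
    ring

lemma integral_two_div_one_sub_mul_sq_of_pos {β : ℝ} (hβ : 0 < β) :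
    ∫ t in (0 : ℝ)..Lb β, 2 / (1 - β * t ^ 2) = calL β := by
  set b := √β
  have hb : 0 < b := sqrt_pos.2 hβ
  have hb2 : b ^ 2 = β := sq_sqrt hβ.le
  have hL := (Lb_pos β).le
  set z := b * Lb β
  have hz : 1 - z ^ 2 = exp (-β) := by rw [mul_pow, hb2, mul_Lb_sq]; ring
  have hz0 : 0 ≤ z := by positivity
  have hz1 : z < 1 := by nlinarith [exp_pos (-β)]
  have hderiv : ∀ t ∈ uIcc 0 (Lb β), HasDerivAt (fun t => (log (1 + b * t) - log (1 - b * t)) / b)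
      (2 / (1 - β * t ^ 2)) t := by
    intro t ht
    rw [uIcc_of_le hL] at ht
    have hplus : 0 < 1 + b * t := by nlinarith [hb.le, ht.1]
    have hminus : 0 < 1 - b * t := by nlinarith [mul_le_mul_of_nonneg_left ht.2 hb.le]
    have hlin := (hasDerivAt_id' t).const_mul b
    refine ((((hlin.const_add 1).log hplus.ne').sub
      ((hlin.const_sub 1).log hminus.ne')).div_const b).congr_deriv ?_
    rw [mul_one, ← hb2, show 1 - b ^ 2 * t ^ 2 = (1 + b * t) * (1 - b * t) by ring]
    field_simp
    ring
  rw [intervalIntegral.integral_eq_sub_of_hasDerivAt hderiv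
    (intervalIntegrable_two_div_one_sub_mul_sq β ⟨le_rfl, hL⟩ ⟨hL, le_rfl⟩)]
  have hartanh : (log (1 + z) - log (1 - z)) / b = 2 / b * artanh z := by
    rw [artanh_eq_half_log ⟨by linarith, hz1.le⟩, log_div (by linarith) (by linarith)]
    ring
  have hsinh : sinh (artanh z) = √(exp β - 1) := by
    rw [sinh_artanh ⟨by linarith, hz1⟩, hz]
    refine div_sqrt_eq_sqrt_of_sq_eq hz0 (exp_pos _) ?_
    rw [sub_mul, one_mul, ← exp_add, add_neg_cancel, exp_zero, ← hz]
    ring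
  change (log (1 + z) - log (1 - z)) / b - (log (1 + b * 0) - log (1 - b * 0)) / b = calL β
  simp [hartanh, calL, hβ, b, ← hsinh, arsinh_sinh]

lemma integral_two_div_one_sub_mul_sq (β : ℝ) :
    ∫ t in (0 : ℝ)..Lb β, 2 / (1 - β * t ^ 2) = calL β := by
  rcases lt_trichotomy β 0 with hβ | rfl | hβ
  · exact integral_two_div_one_sub_mul_sq_of_neg hβ
  · simp [calL, Lb]
  · exact integral_two_div_one_sub_mul_sq_of_pos hβ

/-- Variational bound: for any `Υ ∈ B↗([0,L(β)]²)`,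
`J̃(u_β,Υ) ≤ ∫_0^{L(β)} 2/(1-βt²) dt = 𝓛(β)`. -/
theorem Jcurve_le_calL (β : ℝ) :
    (∀ Υ ∈ Bup 0 (Lb β) 0 (Lb β),
        Jcurve 0 (Lb β) 0 (Lb β) (uBeta β) Υ ≤ ∫ t in (0 : ℝ)..(Lb β), 2 / (1 - β * t ^ 2)) ∧
      (∫ t in (0 : ℝ)..(Lb β), 2 / (1 - β * t ^ 2)) = calL β := by
  refine ⟨fun Υ hΥ => Jcurve_le_of_forall_exists_Jpart_le fun ε hε δ hδ => ?_,
    integral_two_div_one_sub_mul_sq β⟩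
  set I := ∫ t in (0 : ℝ)..(Lb β), 2 / (1 - β * t ^ 2)
  have hlim : Tendsto (fun η => (1 + |β| * (2 * Lb β * η) / denomMin β) * I) (𝓝[>] 0) (𝓝 I) :=
    ((by fun_prop : Continuous fun η => (1 + |β| * (2 * Lb β * η) / denomMin β) * I).tendsto'
      0 I (by simp)).mono_left nhdsWithin_le_nhds
  obtain ⟨η, hηI, hη⟩ :=
    ((hlim.eventually (gt_mem_nhds (lt_add_of_pos_right I hδ))).and (Ioo_mem_nhdsGT hε)).exists
  obtain ⟨n, x, y, hP, hmesh⟩ := exists_isPartitionOn_mesh_lt hΥ hη.1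
  exact ⟨n, x, y, hP, fun k => ⟨(hmesh k).1.trans hη.2, (hmesh k).2.trans hη.2⟩,
    (Jpart_uBeta_le β hP fun k => ⟨(hmesh k).1.le, (hmesh k).2.le⟩).trans hηI.le⟩
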